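/- Let g_1,...,g_J be strictly convex, differentiable, increasing with g_j(0)=0, and suppose the marginal costs are ordered: g'_1(z) ≤ g'_2(z) ≤ ... ≤ g'_J(z) for all z ≥ 0, with g'_j(0) = 0 for all j. Let z* be the unique optimizer of the Leader-Opt problem with budget G > 0 and K < J inspectors. Then all coordinates of z* are strictly positive, and the set A = {i : z*_i = max_j z*_j} equals {1,...,ℓ} for some ℓ with K+1 ≤ ℓ ≤ J, while B = {i : 0 < z*_i < max_j z*_j} equals {ℓ+1,...,J}. -/

import Mathlib

/-!
Raising every coordinate by `t` raises the sum of the `J - K` smallest ones by `(J - K) t`, so at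
an optimum `z` every nonnegative vector of cost below `G` has a strictly smaller objective. Three
perturbations of `z` produce such vectors. Capping the maximal coordinates at the next value
leaves the `J - K` smallest coordinates unchanged unless at least `K + 1` coordinates are maximal.
Moving a little mass from a coordinate `z m` down to a smaller `z i` does not lower the objective,
so optimality forces `g'_m (z m) ≤ g'_i (z i)`. Since each `g'_j` is strictly increasing with
`g'_j 0 = 0`, no coordinate can vanish; since the marginals are ordered, `z` is antitone, so the
maximal coordinates form an initial segment.
-/

open Finset

/-- Sum of the `J - K` smallest coordinates of `z`: the infimum of sums over
`(J-K)`-element subsets of coordinates. -/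
noncomputable def sumSmallest (J K : ℕ) (z : Fin J → ℝ) : ℝ :=
  sInf {s : ℝ | ∃ S : Finset (Fin J), S.card = J - K ∧ s = ∑ i ∈ S, z i}

/-- Feasible stuffing vectors: nonnegative, total cost at most `G`. -/
def Feasible (J : ℕ) (g : Fin J → ℝ → ℝ) (G : ℝ) : Set (Fin J → ℝ) :=
  {z | (∀ j, 0 ≤ z j) ∧ ∑ j, g j (z j) ≤ G}

open Filter Topology

section sumSmallest

variable {J K : ℕ} (z : Fin J → ℝ)

lemma finite_setOf_sum_of_card_eq (n : ℕ) :
    {s : ℝ | ∃ S : Finset (Fin J), #S = n ∧ s = ∑ i ∈ S, z i}.Finite :=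
  (Set.finite_range fun S : Finset (Fin J) => ∑ i ∈ S, z i).subset <| by
    rintro _ ⟨S, -, rfl⟩
    exact ⟨S, rfl⟩

lemma sumSmallest_le_sum {S : Finset (Fin J)} (hS : #S = J - K) :
    sumSmallest J K z ≤ ∑ i ∈ S, z i :=
  csInf_le (finite_setOf_sum_of_card_eq z _).bddBelow ⟨S, hS, rfl⟩

lemma exists_sum_eq_sumSmallest :
    ∃ S : Finset (Fin J), #S = J - K ∧ sumSmallest J K z = ∑ i ∈ S, z i := by
  obtain ⟨S, -, hS⟩ := exists_subset_card_eq (s := (univ : Finset (Fin J))) (n := J - K)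
    (by simp)
  exact Set.Nonempty.csInf_mem (by exact ⟨_, S, hS, rfl⟩) (finite_setOf_sum_of_card_eq z _)

lemma le_sumSmallest {t : ℝ} (h : ∀ S : Finset (Fin J), #S = J - K → t ≤ ∑ i ∈ S, z i) :
    t ≤ sumSmallest J K z := by
  obtain ⟨S, hS, hsum⟩ := exists_sum_eq_sumSmallest (K := K) z
  exact hsum ▸ h S hS

lemma sumSmallest_add_const (c : ℝ) :
    sumSmallest J K (fun i => z i + c) = sumSmallest J K z + (J - K : ℕ) * c := by
  have hsum (S : Finset (Fin J)) (hS : #S = J - K) :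
      ∑ i ∈ S, (z i + c) = ∑ i ∈ S, z i + (J - K : ℕ) * c := by
    rw [sum_add_distrib, sum_const, hS, nsmul_eq_mul]
  apply le_antisymm
  · obtain ⟨S, hS, hz⟩ := exists_sum_eq_sumSmallest (K := K) z
    exact (sumSmallest_le_sum _ hS).trans_eq (by rw [hsum S hS, hz])
  · exact le_sumSmallest _ fun S hS => by
      rw [hsum S hS]
      exact add_le_add_left (sumSmallest_le_sum z hS) _

lemma sumSmallest_le_transfer {i m : Fin J} {δ : ℝ} (hδ : 0 ≤ δ) (h : z i + δ ≤ z m) :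
    sumSmallest J K z ≤
      sumSmallest J K (z + δ • (Pi.single i 1 - Pi.single m 1 : Fin J → ℝ)) := by
  refine le_sumSmallest _ fun S hS => ?_
  have hsum : ∑ j ∈ S, (z + δ • (Pi.single i 1 - Pi.single m 1 : Fin J → ℝ)) j
      = ∑ j ∈ S, z j + δ * ((if i ∈ S then 1 else 0) - if m ∈ S then 1 else 0) := by
    simp only [Pi.add_apply, Pi.smul_apply, Pi.sub_apply, smul_eq_mul, sum_add_distrib, ← mul_sum,
      sum_sub_distrib, sum_pi_single']
  rw [hsum]
  by_cases hswap : m ∈ S ∧ i ∉ S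
  · obtain ⟨hm, hi⟩ := hswap
    have hi' : i ∉ S.erase m := fun h => hi (mem_of_mem_erase h)
    have hle := sumSmallest_le_sum (K := K) z (S := insert i (S.erase m))
      (by rw [card_insert_of_notMem hi', card_erase_add_one hm, hS])
    rw [sum_insert hi', sum_erase_eq_sub hm] at hle
    simp only [hm, hi, if_true, if_false]
    linarith
  · have : 0 ≤ δ * ((if i ∈ S then 1 else 0) - if m ∈ S then 1 else 0 : ℝ) := by
      apply mul_nonneg hδ
      split_ifs <;> simp_all
    linarith [sumSmallest_le_sum (K := K) z hS]

lemma sumSmallest_le_sumSmallest_min {c : ℝ} (hc : J - K ≤ #{i | z i ≤ c}) :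
    sumSmallest J K z ≤ sumSmallest J K (fun i => min (z i) c) := by
  refine le_sumSmallest _ fun S hS => ?_
  set L : Finset (Fin J) := {i | z i ≤ c}
  obtain ⟨T, hTL, hT⟩ := exists_subset_card_eq (s := L \ S) (n := #(S \ L))
    (card_sdiff_le_card_sdiff_iff.mpr (hS ▸ hc))
  have hdisj : Disjoint (S ∩ L) T :=
    disjoint_left.mpr fun j hj hjT => (mem_sdiff.mp (hTL hjT)).2 (mem_inter.mp hj).1
  have hcard : #(S ∩ L ∪ T) = J - K := by
    rw [card_union_of_disjoint hdisj, hT, ← hS, card_inter_add_card_sdiff]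
  calc sumSmallest J K z ≤ ∑ i ∈ S ∩ L ∪ T, z i := sumSmallest_le_sum z hcard
    _ = ∑ i ∈ S ∩ L, min (z i) c + ∑ i ∈ T, z i := by
      rw [sum_union hdisj]
      congr 1
      exact sum_congr rfl fun i hi => (min_eq_left (mem_filter.mp (mem_inter.mp hi).2).2).symm
    _ ≤ ∑ i ∈ S ∩ L, min (z i) c + ∑ _i ∈ T, c := by
      gcongr with i hi
      simpa [L] using (mem_sdiff.mp (hTL hi)).1
    _ = ∑ i ∈ S ∩ L, min (z i) c + ∑ i ∈ S \ L, min (z i) c := by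
      rw [sum_const, hT, ← sum_const]
      congr 1
      refine sum_congr rfl fun i hi => (min_eq_right ?_).symm
      exact (by simpa [L] using (mem_sdiff.mp hi).2 : c < z i).le
    _ = ∑ i ∈ S, min (z i) c := sum_inter_add_sum_sdiff S L _

end sumSmallest

lemma eventually_lt_of_hasDerivAt_neg {f : ℝ → ℝ} {f' x : ℝ} (hf : HasDerivAt f f' x)
    (hf' : f' < 0) : ∀ᶠ t in 𝓝[>] x, f t < f x := by
  filter_upwards [hf.hasDerivWithinAt.limsup_slope_le' (lt_irrefl x) hf', self_mem_nhdsWithin]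
    with t hslope (hxt : x < t)
  rw [slope_def_field, div_neg_iff] at hslope
  rcases hslope with ⟨-, h⟩ | ⟨h, -⟩ <;> linarith

lemma Fin.lt_card_filter_iff_of_antitone {n : ℕ} {p : Fin n → Prop} [DecidablePred p]
    (hp : Antitone p) (i : Fin n) : (i : ℕ) < #{j | p j} ↔ p i := by
  constructor
  · intro hi
    by_contra hpi
    have hsub : ({j | p j} : Finset (Fin n)) ⊆ Iio i := fun j hj => by
      rw [mem_filter] at hj
      exact mem_Iio.mpr (lt_of_not_ge fun hij => hpi (hp hij hj.2))
    have := card_le_card hsub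
    rw [Fin.card_Iio] at this
    omega
  · intro hpi
    have hsub : Iic i ⊆ ({j | p j} : Finset (Fin n)) := fun j hj =>
      mem_filter.mpr ⟨mem_univ j, hp (mem_Iic.mp hj) hpi⟩
    have := card_le_card hsub
    rw [Fin.card_Iic] at this
    omega

section LeaderOpt

variable {J K : ℕ} {g : Fin J → ℝ → ℝ} {G : ℝ} {z : Fin J → ℝ}

lemma sumSmallest_lt_of_cost_lt (hK : K < J) (hg : ∀ j, Continuous (g j))
    (hz : IsMaxOn (sumSmallest J K) (Feasible J g G) z) {x : Fin J → ℝ} (hx : ∀ j, 0 ≤ x j)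
    (hcost : ∑ j, g j (x j) < G) : sumSmallest J K x < sumSmallest J K z := by
  have hcont : Continuous fun t => ∑ j, g j (x j + t) := by fun_prop
  have hslack : ∀ᶠ t in 𝓝[>] 0, ∑ j, g j (x j + t) < G :=
    nhdsWithin_le_nhds <| hcont.continuousAt.eventually_lt continuousAt_const (by simpa using hcost)
  obtain ⟨t, hcost_t, ht⟩ := (hslack.and self_mem_nhdsWithin).exists
  have hfeas : (fun j => x j + t) ∈ Feasible J g G :=
    ⟨fun j => add_nonneg (hx j) (le_of_lt ht), hcost_t.le⟩
  have hgain : 0 < ((J - K : ℕ) : ℝ) * t := mul_pos (by simp [hK]) ht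
  linarith [sumSmallest_add_const (K := K) x t, isMaxOn_iff.mp hz _ hfeas]

-- Otherwise shifting a little mass from `m` to `i` saves cost without lowering the objective.
lemma deriv_le_deriv_of_lt (hK : K < J) (hg : ∀ j, Differentiable ℝ (g j))
    (hfeas : z ∈ Feasible J g G) (hz : IsMaxOn (sumSmallest J K) (Feasible J g G) z)
    {i m : Fin J} (him : z i < z m) : deriv (g m) (z m) ≤ deriv (g i) (z i) := by
  by_contra! hlt
  set v : Fin J → ℝ := Pi.single i 1 - Pi.single m 1
  have hv : ∑ j, deriv (g j) (z j) * v j = deriv (g i) (z i) - deriv (g m) (z m) := by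
    simp [v, mul_sub, sum_sub_distrib, Pi.single_apply]
  have hderiv : HasDerivAt (fun t : ℝ => ∑ j, g j (z j + t * v j))
      (deriv (g i) (z i) - deriv (g m) (z m)) 0 := by
    refine (HasDerivAt.fun_sum fun j _ => ?_).congr_deriv hv
    have hline : HasDerivAt (fun t : ℝ => z j + t * v j) (v j) 0 := by
      simpa using ((hasDerivAt_id (0 : ℝ)).mul_const (v j)).const_add (z j)
    exact (hg j (z j)).hasDerivAt.comp_of_eq 0 hline (by simp)
  obtain ⟨t, hcost, ht_le, ht⟩ :
      ∃ t : ℝ, ∑ j, g j (z j + t * v j) < G ∧ t ≤ z m - z i ∧ 0 < t := by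
    refine (?_ : ∀ᶠ t in 𝓝[>] (0 : ℝ), _).exists
    filter_upwards [eventually_lt_of_hasDerivAt_neg hderiv (by linarith),
      nhdsWithin_le_nhds (eventually_le_nhds (sub_pos.mpr him)), self_mem_nhdsWithin]
      with t hcost ht_le ht
    exact ⟨hcost.trans_le (by simpa using hfeas.2), ht_le, ht⟩
  have hnonneg (j : Fin J) : 0 ≤ z j + t * v j := by
    have := hfeas.1 j
    have := hfeas.1 i
    simp only [v, Pi.sub_apply, Pi.single_apply]
    split_ifs with hji hjm hjm <;> subst_vars <;> linarith
  exact (sumSmallest_lt_of_cost_lt hK (fun j => (hg j).continuous) hz hnonneg hcost).not_ge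
    (sumSmallest_le_transfer z ht.le (by linarith))

lemma pos_of_isMaxOn (hK : K < J) (hG : 0 < G) (hg : ∀ j, Differentiable ℝ (g j))
    (hconv : ∀ j, StrictConvexOn ℝ (Set.Ici 0) (g j)) (hzero : ∀ j, g j 0 = 0)
    (hd0 : ∀ j, deriv (g j) 0 = 0) (hfeas : z ∈ Feasible J g G)
    (hz : IsMaxOn (sumSmallest J K) (Feasible J g G) z) (i : Fin J) : 0 < z i := by
  by_contra! hi
  have hi : z i = 0 := le_antisymm hi (hfeas.1 i)
  obtain ⟨m, hm⟩ : ∃ m, 0 < z m := by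
    by_contra! h
    have hz0 : z = 0 := funext fun j => le_antisymm (h j) (hfeas.1 j)
    have hcost : ∑ j, g j (z j) < G := by simpa [hz0, hzero] using hG
    exact (sumSmallest_lt_of_cost_lt hK (fun j => (hg j).continuous) hz hfeas.1 hcost).false
  have hkkt := deriv_le_deriv_of_lt hK hg hfeas hz (hi ▸ hm : z i < z m)
  have hmarginal := (hconv m).strictMonoOn_deriv (fun x _ => hg m x) Set.self_mem_Ici
    (hfeas.1 m) hm
  rw [hi, hd0] at hkkt
  rw [hd0] at hmarginal
  linarith

lemma antitone_of_isMaxOn (hK : K < J) (hg : ∀ j, Differentiable ℝ (g j))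
    (hconv : ∀ j, StrictConvexOn ℝ (Set.Ici 0) (g j))
    (horder : ∀ i j : Fin J, i ≤ j → ∀ x : ℝ, 0 ≤ x → deriv (g i) x ≤ deriv (g j) x)
    (hfeas : z ∈ Feasible J g G) (hz : IsMaxOn (sumSmallest J K) (Feasible J g G) z) :
    Antitone z := by
  intro i j hij
  by_contra! hlt
  have hkkt := deriv_le_deriv_of_lt hK hg hfeas hz hlt
  have hmarginal := (hconv j).strictMonoOn_deriv (fun x _ => hg j x) (hfeas.1 i) (hfeas.1 j) hlt
  linarith [horder i j hij (z i) (hfeas.1 i)]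

-- If at most `K` coordinates are maximal, none of them is among the `J - K` smallest, so
-- capping them at the next value saves cost without lowering the objective.
lemma lt_card_argmax (hK : K < J) (hg : ∀ j, Continuous (g j))
    (hmono : ∀ j, StrictMonoOn (g j) (Set.Ici 0)) (hfeas : z ∈ Feasible J g G)
    (hz : IsMaxOn (sumSmallest J K) (Feasible J g G) z) : K < #{i | ∀ j, z j ≤ z i} := by
  set A : Finset (Fin J) := {i | ∀ j, z j ≤ z i}
  by_contra! hA
  have : Nonempty (Fin J) := ⟨⟨0, by omega⟩⟩
  obtain ⟨m, -, hm⟩ := exists_max_image univ z univ_nonempty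
  have hAc : #Aᶜ = J - #A := by rw [card_compl, Fintype.card_fin]
  obtain ⟨k, hkA, hk⟩ := exists_max_image Aᶜ z (card_pos.mp (by omega))
  have hcap : J - K ≤ #{i | z i ≤ z k} :=
    (by omega : J - K ≤ #Aᶜ).trans (card_le_card fun i hi => by simpa using hk i hi)
  have hkm : z k < z m := by
    obtain ⟨j, hj⟩ : ∃ j, z k < z j := by simpa [A] using hkA
    exact hj.trans_le (hm j (mem_univ j))
  have hcapped (i : Fin J) : 0 ≤ min (z i) (z k) := le_min (hfeas.1 i) (hfeas.1 k)
  have hcost : ∑ i, g i (min (z i) (z k)) < G := by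
    refine (sum_lt_sum (fun i _ => ?_) ⟨m, mem_univ m, ?_⟩).trans_le hfeas.2
    · exact (hmono i).monotoneOn (hcapped i) (hfeas.1 i) (min_le_left ..)
    · rw [min_eq_right hkm.le]
      exact hmono m (hfeas.1 k) (hfeas.1 m) hkm
  exact (sumSmallest_lt_of_cost_lt hK hg hz hcapped hcost).not_ge
    (sumSmallest_le_sumSmallest_min z hcap)

end LeaderOpt

/-- Under the cost-ordering assumption, the optimizer is strictly positive in
all coordinates, the argmax set is an initial segment `{0,…,ℓ-1}` of size at
least `K+1`, and the remaining coordinates are strictly between `0` and the max. -/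
theorem stmt5 (J K : ℕ) (g : Fin J → ℝ → ℝ) (G : ℝ)
    (hK : K < J) (hG : 0 < G)
    (hconv : ∀ j, StrictConvexOn ℝ (Set.Ici 0) (g j))
    (hdiff : ∀ j, Differentiable ℝ (g j))
    (hmono : ∀ j, StrictMonoOn (g j) (Set.Ici (0 : ℝ)))
    (hzero : ∀ j, g j 0 = 0)
    (horder : ∀ i j : Fin J, i ≤ j → ∀ x : ℝ, 0 ≤ x → deriv (g i) x ≤ deriv (g j) x)
    (hd0 : ∀ j, deriv (g j) 0 = 0)
    (z : Fin J → ℝ)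
    (hfeas : z ∈ Feasible J g G)
    (hmax : ∀ w ∈ Feasible J g G, sumSmallest J K w ≤ sumSmallest J K z) :
    (∀ i, 0 < z i) ∧
    ∃ l : ℕ, K + 1 ≤ l ∧ l ≤ J ∧
      (∀ i : Fin J, ((∀ j, z j ≤ z i) ↔ (i : ℕ) < l)) ∧
      (∀ i : Fin J, ((0 < z i ∧ ∃ j, z i < z j) ↔ l ≤ (i : ℕ))) := by
  have hz : IsMaxOn (sumSmallest J K) (Feasible J g G) z := isMaxOn_iff.mpr hmax
  have hpos := pos_of_isMaxOn hK hG hdiff hconv hzero hd0 hfeas hz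
  have hanti := antitone_of_isMaxOn hK hdiff hconv horder hfeas hz
  have hargmax : Antitone fun i => ∀ j, z j ≤ z i :=
    fun i i' hii' hi' j => (hi' j).trans (hanti hii')
  refine ⟨hpos, #{i | ∀ j, z j ≤ z i},
    lt_card_argmax hK (fun j => (hdiff j).continuous) hmono hfeas hz,
    (card_le_univ _).trans_eq (Fintype.card_fin J),
    fun i => (Fin.lt_card_filter_iff_of_antitone hargmax i).symm, fun i => ?_⟩
  rw [← not_lt, Fin.lt_card_filter_iff_of_antitone hargmax]
  simp [hpos i]
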